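/- arXiv:1604.00712 — 4 statements merged into one kernel-verified Lean document; each statement's English description precedes it below -/
import Mathlib

section
/- Let V be a finite-dimensional vector space over 𝔽_p and α : V × V → 𝔽_p an alternating (antisymmetric) bilinear form. Suppose a finite p-group P acts linearly on V preserving α. Then there exists a maximal isotropic subspace U of V (i.e., U is isotropic and U equals its own orthogonal complement with respect to α) which is P-invariant. -/
/-!
Choose a `P`-stable isotropic subspace `U` maximal under inclusion. Its orthogonal `U^⊥` is again
`P`-stable and contains `U`. If `U ≠ U^⊥`, the `p`-group `P` acts linearly on the nonzero
`𝔽_p`-space `U^⊥ / U`, whose cardinality is divisible by `p`; since orbits have `p`-power size,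
the number of fixed points is divisible by `p` too, so some nonzero class `v + U` is fixed.
Then `U + 𝔽_p v` is `P`-stable and, `α` being alternating, isotropic, contradicting maximality.
-/

open Submodule
open LinearMap (BilinForm)

namespace IsPGroup

variable {p : ℕ} [Fact p.Prime] {P : Type*} [Group P]

theorem exists_mem_invariants_ne_zero {Q : Type*} (hP : IsPGroup p P) [AddCommGroup Q]
    [Module (ZMod p) Q] [Finite Q] [Nontrivial Q] (σ : Representation (ZMod p) P Q) :
    ∃ q ∈ σ.invariants, q ≠ 0 := by
  let _ : MulAction P Q := MulAction.compHom Q σ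
  have hcard : p ∣ Nat.card Q :=
    (ZModModule.isPGroup_multiplicative (G := Q)).card_eq_or_dvd.resolve_left
      Finite.one_lt_card.ne'
  obtain ⟨q, hq, hne⟩ :=
    hP.exists_fixed_point_of_prime_dvd_card_of_fixed_point Q hcard (a := 0)
      fun g => map_zero (σ g)
  exact ⟨q, hq, hne.symm⟩

theorem exists_mem_notMem_forall_sub_mem {V : Type*} (hP : IsPGroup p P) [AddCommGroup V]
    [Module (ZMod p) V] [Finite V] (σ : Representation (ZMod p) P V)
    {U W : Submodule (ZMod p) V} (hU : ∀ g, U ≤ U.comap (σ g)) (hW : ∀ g, W ≤ W.comap (σ g))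
    (hUW : U < W) : ∃ v ∈ W, v ∉ U ∧ ∀ g, σ g v - v ∈ U := by
  let σQ := σ.quotient U hU
  have : Finite (V ⧸ U) := Finite.of_surjective U.mkQ U.mkQ_surjective
  have hWQ : ∀ g, W.map U.mkQ ≤ (W.map U.mkQ).comap (σQ g) := by
    rintro g _ ⟨w, hw, rfl⟩
    exact ⟨σ g w, hW g hw, rfl⟩
  have : Nontrivial (W.map U.mkQ) := by
    obtain ⟨w, hw, hwU⟩ := SetLike.exists_of_lt hUW
    refine nontrivial_of_ne ⟨U.mkQ w, mem_map_of_mem hw⟩ 0 ?_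
    simpa [Subtype.ext_iff] using hwU
  obtain ⟨⟨_, w, hw, rfl⟩, hfix, hne⟩ :=
    hP.exists_mem_invariants_ne_zero (σQ.subrepresentation _ hWQ)
  refine ⟨w, hw, by simpa [Subtype.ext_iff] using hne, fun g => ?_⟩
  exact (Submodule.Quotient.eq U).1 (by simpa [σQ, Subtype.ext_iff] using hfix g)

end IsPGroup

namespace LinearMap.BilinForm

variable {K V : Type*} [Field K] [AddCommGroup V] [Module K V] {B : BilinForm K V}

theorem IsAlt.sup_span_singleton_le_orthogonal (hB : B.IsAlt) {U : Submodule K V}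
    (hU : U ≤ B.orthogonal U) {v : V} (hv : v ∈ B.orthogonal U) :
    U ⊔ K ∙ v ≤ B.orthogonal (U ⊔ K ∙ v) := by
  intro x hx y hy
  obtain ⟨u, hu, _, hav, rfl⟩ := mem_sup.1 hx
  obtain ⟨u', hu', _, hbv, rfl⟩ := mem_sup.1 hy
  obtain ⟨a, rfl⟩ := mem_span_singleton.1 hav
  obtain ⟨b, rfl⟩ := mem_span_singleton.1 hbv
  have hvu : B v u = 0 := hB.eq_iff.1 (hv u hu)
  simp [hU hu u' hu', hv u' hu', hvu, hB.self_eq_zero]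

theorem orthogonal_le_comap {G : Type*} [Group G] (σ : Representation K G V)
    (hσB : ∀ g x y, B (σ g x) (σ g y) = B x y) {U : Submodule K V}
    (hU : ∀ g, U ≤ U.comap (σ g)) (g : G) :
    B.orthogonal U ≤ (B.orthogonal U).comap (σ g) := by
  intro m hm n hn
  rw [← σ.self_inv_apply g n, hσB]
  exact hm _ (hU g⁻¹ hn)

end LinearMap.BilinForm

theorem Submodule.sup_span_singleton_le_comap {K V : Type*} [Field K] [AddCommGroup V]
    [Module K V] {f : V →ₗ[K] V} {U : Submodule K V} (hU : U ≤ U.comap f) {v : V}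
    (hv : f v - v ∈ U) : U ⊔ K ∙ v ≤ (U ⊔ K ∙ v).comap f := by
  refine sup_le (hU.trans (comap_mono le_sup_left)) ((span_singleton_le_iff_mem _ _).2 ?_)
  rw [mem_comap, ← sub_add_cancel (f v) v]
  exact add_mem (mem_sup_left hv) (mem_sup_right (mem_span_singleton_self v))

theorem IsPGroup.exists_orthogonal_eq_self {p : ℕ} [Fact p.Prime] {P V : Type*} [Group P]
    (hP : IsPGroup p P) [AddCommGroup V] [Module (ZMod p) V] [Finite V]
    (σ : Representation (ZMod p) P V) {B : BilinForm (ZMod p) V} (hB : B.IsAlt)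
    (hσB : ∀ g x y, B (σ g x) (σ g y) = B x y) :
    ∃ U : Submodule (ZMod p) V, B.orthogonal U = U ∧ ∀ g, U ≤ U.comap (σ g) := by
  obtain ⟨U, ⟨hUB, hUσ⟩, hmax⟩ := wellFounded_gt.has_min
    {U : Submodule (ZMod p) V | U ≤ B.orthogonal U ∧ ∀ g, U ≤ U.comap (σ g)}
    ⟨⊥, bot_le, fun _ => bot_le⟩
  refine ⟨U, le_antisymm ?_ hUB, hUσ⟩
  by_contra hUB'
  obtain ⟨v, hv, hvU, hvσ⟩ := hP.exists_mem_notMem_forall_sub_mem σ hUσ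
    (B.orthogonal_le_comap σ hσB hUσ) (lt_of_le_not_ge hUB hUB')
  refine hmax (U ⊔ ZMod p ∙ v) ⟨hB.sup_span_singleton_le_orthogonal hUB hv,
    fun g => sup_span_singleton_le_comap (hUσ g) (hvσ g)⟩ ?_
  simpa [span_singleton_le_iff_mem] using hvU

theorem stmt0_general (p : ℕ) [Fact p.Prime] (V : Type*) [AddCommGroup V] [Module (ZMod p) V]
    [FiniteDimensional (ZMod p) V]
    (α : V →ₗ[ZMod p] V →ₗ[ZMod p] ZMod p) (halt : ∀ v : V, α v v = 0)
    (P : Type*) [Group P] (hP : IsPGroup p P)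
    (ρ : P →* (V ≃ₗ[ZMod p] V))
    (hpres : ∀ (g : P) (v w : V), α (ρ g v) (ρ g w) = α v w) :
    ∃ U : Submodule (ZMod p) V,
      (∀ u ∈ U, ∀ w ∈ U, α u w = 0) ∧
      (∀ v : V, (∀ u ∈ U, α v u = 0) → v ∈ U) ∧
      (∀ (g : P), ∀ u ∈ U, ρ g u ∈ U) := by
  have : Finite V := Module.finite_of_finite (ZMod p)
  obtain ⟨U, hU, hUρ⟩ := hP.exists_orthogonal_eq_self
    (LinearEquiv.automorphismGroup.toLinearMapMonoidHom.comp ρ) (B := α) halt hpres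
  refine ⟨U, fun u hu w hw => ?_, fun v hv => ?_, fun g u hu => hUρ g hu⟩
  · rw [← hU] at hw
    exact hw u hu
  · rw [← hU]
    exact fun u hu => (LinearMap.BilinForm.IsAlt.eq_iff halt).1 (hv u hu)

/-- Let `V` be a finite-dimensional vector space over `𝔽_p` and `α` an
antisymmetric (alternating) bilinear form on `V`. Suppose a finite `p`-group `P` acts
linearly on `V` preserving `α`. Then there is a maximal isotropic subspace `U` of `V`
(isotropic and equal to its own orthogonal complement) which is `P`-invariant. -/
theorem stmt0 (p : ℕ) [Fact p.Prime] (V : Type*) [AddCommGroup V] [Module (ZMod p) V]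
    [FiniteDimensional (ZMod p) V]
    (α : V →ₗ[ZMod p] V →ₗ[ZMod p] ZMod p) (halt : ∀ v : V, α v v = 0)
    (P : Type*) [Group P] [Finite P] (hP : IsPGroup p P)
    (ρ : P →* (V ≃ₗ[ZMod p] V))
    (hpres : ∀ (g : P) (v w : V), α (ρ g v) (ρ g w) = α v w) :
    ∃ U : Submodule (ZMod p) V,
      (∀ u ∈ U, ∀ w ∈ U, α u w = 0) ∧
      (∀ v : V, (∀ u ∈ U, α v u = 0) → v ∈ U) ∧
      (∀ (g : P), ∀ u ∈ U, ρ g u ∈ U) :=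
  stmt0_general p V α halt P hP ρ hpres
end

section
/- Let k ⊂ k₂ be finite fields with |k| = q and |k₂| = q², q even, with Frobenius x ↦ x^q generating Gal(k₂/k). Extend this to the involution on k₂[t] sending h(t) = ∑ c_i t^i to h̃(t) = ∑ (-1)^{deg(h)-i} c_i^q t^i. If f(t) ∈ k₂[t] is monic irreducible of degree d with f̃ = f, then d is odd and every root ξ of f in an algebraic closure lies in the subfield k_d of degree d over k (equivalently ξ^{q^d} = ξ), and Tr_{k_{2d}/k_d}(ξ) = 0. -/
/-!
In characteristic 2 the signs in `h̃` disappear, so `f̃ = f` says that the coefficients of `f`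
lie in the subfield `k` of order `q`. Over `k`, `f` is still irreducible of degree `d`, hence
divides `X ^ q ^ d - X`; this gives `ξ ^ q ^ d = ξ`, and the trace is `2ξ = 0`. If `d = 2c` were
even, then `q ^ d = (q ^ 2) ^ c` would be a power of `|k₂|`, forcing `d ∣ c`.
-/

open Polynomial

/-- The involution `h ↦ h̃` on `k₂[t]`, sending `∑ cᵢ tⁱ` to
`∑ (-1)^(deg h - i) cᵢ^q tⁱ` (the coefficientwise map `x ↦ x^q` together with
alternating signs). -/
noncomputable def tildePoly {K : Type*} [Field K] (q : ℕ) (h : K[X]) : K[X] :=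
  ∑ i ∈ Finset.range (h.natDegree + 1),
    C ((-1 : K) ^ (h.natDegree - i) * (h.coeff i) ^ q) * X ^ i

theorem coeff_tildePoly_of_charTwo {K : Type*} [Field K] [CharP K 2] {q : ℕ} (hq : q ≠ 0)
    (h : K[X]) (i : ℕ) : (tildePoly q h).coeff i = h.coeff i ^ q := by
  simp only [tildePoly, finsetSum_coeff, coeff_C_mul, coeff_X_pow, CharTwo.neg_eq, one_pow,
    one_mul, mul_ite, mul_one, mul_zero, Finset.sum_ite_eq, Finset.mem_range]
  split_ifs with hi
  · rfl
  · rw [coeff_eq_zero_of_natDegree_lt (by omega), zero_pow hq]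

theorem FiniteField.ringChar_eq_two_of_two_dvd_card {K : Type*} [Field K] [Fintype K]
    (h : 2 ∣ Fintype.card K) : ringChar K = 2 := by
  obtain ⟨n, hp, hcard⟩ := FiniteField.card K (ringChar K)
  rw [hcard] at h
  exact ((Nat.prime_dvd_prime_iff_eq Nat.prime_two hp).1 (Nat.prime_two.dvd_of_dvd_pow h)).symm

theorem FiniteField.exists_eq_pow_of_dvd_card {K : Type*} [Field K] [Fintype K] {p q : ℕ}
    [CharP K p] (h : q ∣ Fintype.card K) : ∃ m, q = p ^ m := by
  obtain ⟨n, hp, hcard⟩ := FiniteField.card K p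
  rw [hcard] at h
  obtain ⟨m, -, hm⟩ := (Nat.dvd_prime_pow hp).1 h
  exact ⟨m, hm⟩

section FrobeniusFixed

variable (K : Type*) [Field K] (p m : ℕ)

def frobeniusFixedSubfield [ExpChar K p] : Subfield K :=
  (iterateFrobenius K p m).eqLocusField (RingHom.id K)

variable {K p m}

theorem mem_frobeniusFixedSubfield [ExpChar K p] {x : K} :
    x ∈ frobeniusFixedSubfield K p m ↔ x ^ p ^ m = x :=
  Iff.rfl

theorem natCard_frobeniusFixedSubfield [Finite K] [CharP K p] [Fact p.Prime] {n : ℕ}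
    (hn : n ≠ 0) (hm : m ≠ 0) (hcard : Nat.card K = (p ^ m) ^ n) :
    Nat.card (frobeniusFixedSubfield K p m) = p ^ m := by
  have hp : 1 < p ^ m := Nat.one_lt_pow hm (Fact.out : p.Prime).one_lt
  have hsplits : Splits ((X ^ p ^ m - X : K[X]).map (algebraMap K K)) := by
    rw [Algebra.algebraMap_self, Polynomial.map_id]
    refine (hcard ▸ splits_X_pow_nat_card_sub_X).of_dvd ?_ ?_
    · exact FiniteField.X_pow_card_sub_X_ne_zero K (Nat.one_lt_pow hn hp)
    · rw [← pow_mul]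
      exact dvd_pow_pow_sub_self_of_dvd (dvd_mul_right m n)
  have hroots : (frobeniusFixedSubfield K p m : Set K) = (X ^ p ^ m - X : K[X]).rootSet K := by
    ext x
    rw [mem_rootSet_of_ne (FiniteField.X_pow_card_sub_X_ne_zero K hp)]
    simp [mem_frobeniusFixedSubfield, sub_eq_zero]
  rw [← SetLike.coe_sort_coe, hroots, Nat.card_eq_fintype_card,
    card_rootSet_eq_natDegree (galois_poly_separable p _ (dvd_pow_self p hm)) hsplits,
    FiniteField.X_pow_card_sub_X_natDegree_eq K hp]

end FrobeniusFixed

theorem Polynomial.Monic.dvd_X_pow_natCard_pow_sub_X_of_coeff_mem {K : Type*} [Field K]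
    {k : Subfield K} [Finite k] {f : K[X]} (hmonic : f.Monic) (hirr : Irreducible f)
    (hcoeff : ∀ i, f.coeff i ∈ k) : f ∣ X ^ Nat.card k ^ f.natDegree - X := by
  obtain ⟨f₀, hmap, hdeg, hmonic₀⟩ := lifts_and_natDegree_eq_and_monic
    ((lifts_iff_coeff_lifts (f := algebraMap k K) f).2 fun i => ⟨⟨_, hcoeff i⟩, rfl⟩) hmonic
  have hirr₀ : Irreducible f₀ := hmonic₀.irreducible_of_irreducible_map _ _ (hmap ▸ hirr)
  have hdvd₀ : f₀ ∣ X ^ Nat.card k ^ f₀.natDegree - X :=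
    hirr₀.natDegree_dvd_iff_dvd_X_pow_card_pow_sub_X.1 dvd_rfl
  simpa [hmap, hdeg] using map_dvd (algebraMap k K) hdvd₀

theorem Irreducible.odd_natDegree_of_dvd_X_pow_pow_sub_X {K : Type*} [Field K] {q : ℕ}
    (hcard : Nat.card K = q ^ 2) {f : K[X]} (hirr : Irreducible f)
    (hdvd : f ∣ X ^ q ^ f.natDegree - X) : Odd f.natDegree := by
  rw [← Nat.not_even_iff_odd]
  rintro ⟨c, hc⟩
  have hpos := hirr.natDegree_pos
  have hdvd_c : f.natDegree ∣ c := hirr.natDegree_dvd_of_dvd_X_pow_card_pow_sub_X <| by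
    rwa [hcard, ← pow_mul, two_mul, ← hc]
  have := Nat.le_of_dvd (by omega) hdvd_c
  omega

/-- `q` even, `k₂` the field with `q²` elements. If `f ∈ k₂[t]` is monic
irreducible of degree `d` with `f̃ = f`, then `d` is odd, every root `ξ` of `f` in an
algebraic closure lies in the subfield of degree `d` over `𝔽_q` (i.e. `ξ^(q^d) = ξ`),
and `Tr_{k_{2d}/k_d}(ξ) = ξ + ξ^(q^d) = 0`. -/
theorem stmt2 (q : ℕ) (hq : Even q) (k₂ : Type*) [Field k₂] [Fintype k₂]
    (hcard : Fintype.card k₂ = q ^ 2)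
    (f : k₂[X]) (hmonic : f.Monic) (hirr : Irreducible f) (d : ℕ) (hdeg : f.natDegree = d)
    (htilde : tildePoly q f = f)
    (ξ : AlgebraicClosure k₂) (hroot : Polynomial.aeval ξ f = 0) :
    Odd d ∧ ξ ^ (q ^ d) = ξ ∧ ξ + ξ ^ (q ^ d) = 0 := by
  subst hdeg
  have hq_dvd : q ∣ Fintype.card k₂ := hcard ▸ dvd_pow_self q two_ne_zero
  have : CharP k₂ 2 := FiniteField.ringChar_eq_two_of_two_dvd_card
    (hq.two_dvd.trans hq_dvd) ▸ ringChar.charP k₂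
  obtain ⟨m, rfl⟩ := FiniteField.exists_eq_pow_of_dvd_card (p := 2) hq_dvd
  have hm : m ≠ 0 := by
    rintro rfl
    simpa [hcard] using (Fintype.one_lt_card : 1 < Fintype.card k₂)
  set k := frobeniusFixedSubfield k₂ 2 m
  have hk : Nat.card k = 2 ^ m := natCard_frobeniusFixedSubfield two_ne_zero hm
    (by rw [Nat.card_eq_fintype_card, hcard])
  have hcoeff (i : ℕ) : f.coeff i ∈ k := by
    rw [mem_frobeniusFixedSubfield, ← coeff_tildePoly_of_charTwo (by positivity), htilde]
  have hdvd : f ∣ X ^ (2 ^ m) ^ f.natDegree - X :=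
    hk ▸ hmonic.dvd_X_pow_natCard_pow_sub_X_of_coeff_mem hirr hcoeff
  have hfixed : ξ ^ (2 ^ m) ^ f.natDegree = ξ := by
    obtain ⟨g, hg⟩ := hdvd
    simpa [hroot, sub_eq_zero] using congrArg (aeval ξ) hg
  refine ⟨hirr.odd_natDegree_of_dvd_X_pow_pow_sub_X ?_ hdvd, hfixed, ?_⟩
  · rw [Nat.card_eq_fintype_card, hcard]
  · rw [hfixed, CharTwo.add_self_eq_zero]
end

section
/- Let k₂/k be a quadratic extension of finite fields, |k| = q, and let ~ be the involution on monic polynomials in k₂[t] given by h̃(t) = ∑ (-1)^{deg h - i} c_i^q t^i for h = ∑ c_i t^i. If n is odd, the number of monic irreducible polynomials f ∈ k₂[t] of degree n with f̃ = f equals w_n(q) = (1/n) ∑_{m|n} μ(n/m) q^m. -/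
open Polynomial

/-!
Let `τ z = -z ^ q` on an algebraic closure `Ω` of `k₂ = 𝔽_{q²}`. Then `τ` carries the roots of
`h` to those of `h̃`, and `τ ∘ τ` is the Frobenius `z ↦ z ^ q²` of `k₂`, whose minimal period at
`x` is the degree of the minimal polynomial of `x`. Hence, for odd `n`, the minimal polynomial of
`x` has degree `n` and is fixed by `~` exactly when `x` has minimal `τ`-period `n`, and `n` times
the number of such polynomials is the number of points of minimal `τ`-period `n`. For odd `m`
the points with `τ^[m] z = z` are the `q ^ m` roots of the separable polynomial `X ^ q ^ m + X`,
and Möbius inversion finishes the count.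
-/

open Function

section TildePoly

variable {K : Type*} [Field K] {q : ℕ}

lemma tildePoly_coeff (h : K[X]) (j : ℕ) :
    (tildePoly q h).coeff j =
      if j ≤ h.natDegree then (-1 : K) ^ (h.natDegree - j) * h.coeff j ^ q else 0 := by
  simp only [tildePoly, finsetSum_coeff, coeff_C_mul, coeff_X_pow, mul_ite, mul_one, mul_zero,
    Finset.sum_ite_eq, Finset.mem_range, Nat.lt_succ_iff]

lemma natDegree_tildePoly {h : K[X]} (hm : h.Monic) :
    (tildePoly q h).natDegree = h.natDegree := by
  refine le_antisymm (natDegree_le_iff_coeff_eq_zero.2 fun j hj => ?_)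
    (le_natDegree_of_ne_zero ?_)
  · rw [tildePoly_coeff, if_neg (by omega)]
  · simp [tildePoly_coeff, hm.coeff_natDegree]

lemma monic_tildePoly {h : K[X]} (hm : h.Monic) : (tildePoly q h).Monic := by
  simp [Monic, leadingCoeff, natDegree_tildePoly hm, tildePoly_coeff, hm.coeff_natDegree]

end TildePoly

def negFrob {L : Type*} [Ring L] (q : ℕ) (z : L) : L := -z ^ q

section NegFrob

variable {L : Type*} [CommRing L] {p a q : ℕ} [ExpChar L p]

lemma negFrob_iterate (hq : q = p ^ a) (m : ℕ) (y : L) :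
    (negFrob q)^[m] y = (-1) ^ m * y ^ q ^ m := by
  induction m with
  | zero => simp
  | succ m ih =>
    subst hq
    have hsign : ((-1 : L) ^ m) ^ p ^ a = (-1) ^ m := by
      rw [← pow_mul, mul_comm, pow_mul, neg_one_pow_expChar_pow]
    rw [iterate_succ_apply', ih, negFrob, mul_pow, hsign, ← pow_mul, ← pow_succ]
    ring

lemma negFrob_iterate_two (hq : q = p ^ a) : (negFrob q)^[2] = fun y : L => y ^ q ^ 2 := by
  funext y
  simp [negFrob_iterate hq]

lemma aeval_negFrob_tildePoly {K : Type*} [Field K] [Algebra K L] (hq : q = p ^ a)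
    (h : K[X]) (y : L) :
    aeval (negFrob q y) (tildePoly q h) = (-1) ^ h.natDegree * aeval y h ^ q := by
  have hfrob : ∀ z : L, z ^ q = iterateFrobenius L p a z := fun z => by
    rw [iterateFrobenius_def, hq]
  rw [hfrob, aeval_eq_sum_range (p := h), map_sum, tildePoly, map_sum, Finset.mul_sum]
  refine Finset.sum_congr rfl fun i hi => ?_
  have hi : i ≤ h.natDegree := Nat.lt_succ_iff.mp (Finset.mem_range.mp hi)
  rw [show (-1 : L) ^ h.natDegree = (-1) ^ (h.natDegree - i) * (-1) ^ i by
    rw [← pow_add, Nat.sub_add_cancel hi]]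
  rw [map_mul, map_pow, aeval_C, aeval_X, Algebra.smul_def, map_mul, map_pow, ← hfrob,
    map_neg, map_one, map_pow, negFrob, neg_pow]
  ring

lemma aeval_negFrob_tildePoly_eq_zero {K : Type*} [Field K] [Algebra K L] (hq : q = p ^ a)
    {h : K[X]} {y : L} (hy : aeval y h = 0) : aeval (negFrob q y) (tildePoly q h) = 0 := by
  rw [aeval_negFrob_tildePoly hq, hy, zero_pow (by subst hq; exact (expChar_pow_pos L p a).ne'),
    mul_zero]

end NegFrob

section FiniteField

variable {K : Type*} [Field K] [Fintype K]

lemma aeval_pow_card_pow {L : Type*} [CommRing L] [Algebra K L] (h : K[X]) (y : L) (j : ℕ) :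
    aeval (y ^ Fintype.card K ^ j) h = aeval y h ^ Fintype.card K ^ j := by
  induction j with
  | zero => simp
  | succ j ih => rw [pow_succ, pow_mul, ← expand_aeval, FiniteField.expand_card, map_pow, ih,
      ← pow_mul]

variable {L : Type*} [Field L] [Algebra K L] {x : L}

lemma isPeriodicPt_pow_card_iff (hx : IsIntegral K x) (e : ℕ) :
    IsPeriodicPt (· ^ Fintype.card K) e x ↔ (minpoly K x).natDegree ∣ e := by
  rw [(minpoly.irreducible hx).natDegree_dvd_iff_dvd_X_pow_card_pow_sub_X, minpoly.dvd_iff,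
    Nat.card_eq_fintype_card, IsPeriodicPt, IsFixedPt, pow_iterate]
  simp [sub_eq_zero]

lemma minimalPeriod_pow_card (hx : IsIntegral K x) :
    minimalPeriod (· ^ Fintype.card K) x = (minpoly K x).natDegree :=
  Nat.dvd_antisymm ((isPeriodicPt_pow_card_iff hx _).2 dvd_rfl).minimalPeriod_dvd
    ((isPeriodicPt_pow_card_iff hx _).1 (isPeriodicPt_minimalPeriod _ _))

end FiniteField

section Dynamics

variable {α : Type*} {f : α → α}

lemma minimalPeriod_le_ncard_of_mapsTo {s : Set α} (hs : s.Finite) (hmaps : Set.MapsTo f s s)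
    {x : α} (hx : x ∈ s) : minimalPeriod f x ≤ s.ncard := by
  calc minimalPeriod f x = ((f^[·] x) '' Set.Iio (minimalPeriod f x)).ncard := by
        rw [iterate_injOn_Iio_minimalPeriod.ncard_image, Set.ncard_eq_toFinset_card',
          Set.toFinset_Iio, Nat.card_Iio]
    _ ≤ s.ncard := Set.ncard_le_ncard (Set.image_subset_iff.2 fun i _ => hmaps.iterate i hx) hs

lemma ncard_setOf_isPeriodicPt {m : ℕ} (hm : 0 < m) (hfin : {x | IsPeriodicPt f m x}.Finite) :
    {x | IsPeriodicPt f m x}.ncard = ∑ d ∈ m.divisors, {x | minimalPeriod f x = d}.ncard := by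
  classical
  rw [Set.ncard_eq_toFinset_card _ hfin, Finset.card_eq_sum_card_fiberwise (f := minimalPeriod f)
    (t := m.divisors) fun x hx => Nat.mem_divisors.2
      ⟨(hfin.mem_toFinset.1 hx).minimalPeriod_dvd, hm.ne'⟩]
  refine Finset.sum_congr rfl fun d hd => ?_
  rw [← Set.ncard_coe_finset]
  congr 1
  ext x
  simp only [Finset.coe_filter, Set.Finite.mem_toFinset, Set.mem_ofPred_eq, and_iff_right_iff_imp]
  rintro rfl
  exact isPeriodicPt_iff_minimalPeriod_dvd.2 (Nat.dvd_of_mem_divisors hd)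

end Dynamics

lemma mapsTo_negFrob_rootSet {K L : Type*} [Field K] [CommRing L] [IsDomain L] [Algebra K L]
    {p a q : ℕ} [ExpChar L p] (hq : q = p ^ a) {f : K[X]} (hf : tildePoly q f = f) :
    Set.MapsTo (negFrob q) (f.rootSet L) (f.rootSet L) := fun y hy => by
  rw [mem_rootSet] at hy ⊢
  exact ⟨hy.1, hf ▸ aeval_negFrob_tildePoly_eq_zero hq hy.2⟩

section MinimalPeriod

variable {K : Type*} [Field K] [Fintype K] {L : Type*} [Field L] [Algebra K L]
  {p a q : ℕ} [ExpChar L p] {x : L}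

lemma natDegree_minpoly_eq_minimalPeriod_negFrob_div_gcd (hq : q = p ^ a)
    (hcard : Fintype.card K = q ^ 2) (hx : IsIntegral K x) :
    (minpoly K x).natDegree =
      minimalPeriod (negFrob q) x / (minimalPeriod (negFrob q) x).gcd 2 := by
  rw [← minimalPeriod_pow_card hx, hcard, ← negFrob_iterate_two hq,
    minimalPeriod_iterate_eq_div_gcd two_ne_zero]

lemma minimalPeriod_negFrob_eq_iff (hq : q = p ^ a) (hcard : Fintype.card K = q ^ 2)
    (hx : IsIntegral K x) {n : ℕ} (hn : Odd n) :
    minimalPeriod (negFrob q) x = n ↔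
      (minpoly K x).natDegree = n ∧ tildePoly q (minpoly K x) = minpoly K x := by
  have hdeg := natDegree_minpoly_eq_minimalPeriod_negFrob_div_gcd hq hcard hx
  constructor
  · intro hxn
    rw [hxn, (Nat.coprime_two_right.2 hn).gcd_eq_one, Nat.div_one] at hdeg
    refine ⟨hdeg, ?_⟩
    obtain ⟨k, rfl⟩ := hn
    -- `x` is the image under `negFrob q` of its conjugate `x ^ (q ^ 2) ^ k`.
    have hconj : (negFrob q)^[2 * k] x = x ^ Fintype.card K ^ k := by
      rw [iterate_mul, negFrob_iterate_two hq, pow_iterate, hcard]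
    have hy : aeval ((negFrob q)^[2 * k] x) (minpoly K x) = 0 := by
      rw [hconj, aeval_pow_card_pow, minpoly.aeval, zero_pow (by positivity)]
    have hxy : negFrob q ((negFrob q)^[2 * k] x) = x := by
      rw [← iterate_succ_apply' (negFrob q), Nat.succ_eq_add_one, ← hxn]
      exact isPeriodicPt_minimalPeriod _ _
    have hroot := aeval_negFrob_tildePoly_eq_zero hq hy
    rw [hxy] at hroot
    exact eq_of_monic_of_dvd_of_natDegree_le (minpoly.monic hx)
      (monic_tildePoly (minpoly.monic hx)) (minpoly.dvd K x hroot)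
      (natDegree_tildePoly (minpoly.monic hx)).le
  · rintro ⟨hdegn, htilde⟩
    -- `negFrob q` permutes the at most `n` roots of the minimal polynomial.
    have hle : minimalPeriod (negFrob q) x ≤ n :=
      calc minimalPeriod (negFrob q) x ≤ ((minpoly K x).rootSet L).ncard :=
            minimalPeriod_le_ncard_of_mapsTo (rootSet_finite _ _)
              (mapsTo_negFrob_rootSet hq htilde)
              (mem_rootSet.2 ⟨minpoly.ne_zero hx, minpoly.aeval K x⟩)
        _ ≤ n := hdegn ▸ ncard_rootSet_le _ _
    have hge : n ≤ minimalPeriod (negFrob q) x := hdegn ▸ hdeg ▸ Nat.div_le_self _ _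
    omega

end MinimalPeriod

section Counting

lemma ncard_rootSet_eq_natDegree {F K : Type*} [Field F] [Field K] [Algebra F K] {f : F[X]}
    (hsep : f.Separable) (hsplit : Splits (f.map (algebraMap F K))) :
    (f.rootSet K).ncard = f.natDegree := by
  rw [← Nat.card_coe_set_eq, Nat.card_eq_fintype_card, card_rootSet_eq_natDegree hsep hsplit]

lemma natDegree_X_pow_add_X {R : Type*} [Semiring R] [Nontrivial R] {N : ℕ} (hN : 2 ≤ N) :
    (X ^ N + X : R[X]).natDegree = N := by
  rw [natDegree_add_eq_left_of_natDegree_lt (by simp; omega), natDegree_X_pow]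

variable {L : Type*} [Field L]

lemma ncard_rootSet_X_pow_add_X [IsAlgClosed L] {N : ℕ} (hN : (N : L) = 0) (hN2 : 2 ≤ N) :
    ((X ^ N + X : L[X]).rootSet L).ncard = N := by
  have hsep : (X ^ N + X : L[X]).Separable := by
    rw [separable_def, derivative_add, derivative_X_pow, derivative_X, hN]
    simpa using isCoprime_one_right
  rw [ncard_rootSet_eq_natDegree hsep (IsAlgClosed.splits _), natDegree_X_pow_add_X hN2]

variable {p a q : ℕ} [ExpChar L p]

lemma two_le_of_natCast_eq_zero (hq : q = p ^ a) (hq0 : (q : L) = 0) : 2 ≤ q := by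
  have hq1 : q ≠ 1 := fun h => by simp [h] at hq0
  have : q ≠ 0 := hq ▸ pow_ne_zero a (expChar_pos L p).ne'
  omega

lemma setOf_isPeriodicPt_negFrob (hq : q = p ^ a) (hq0 : (q : L) = 0) {m : ℕ} (hm : Odd m) :
    {y : L | IsPeriodicPt (negFrob q) m y} = (X ^ q ^ m + X : L[X]).rootSet L := by
  have hm2 : 2 ≤ q ^ m :=
    (two_le_of_natCast_eq_zero hq hq0).trans (Nat.le_self_pow hm.pos.ne' q)
  have hne : (X ^ q ^ m + X : L[X]) ≠ 0 :=
    ne_zero_of_natDegree_gt (n := 0) (by rw [natDegree_X_pow_add_X hm2]; omega)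
  ext y
  rw [Set.mem_ofPred_eq, mem_rootSet_of_ne hne, IsPeriodicPt, IsFixedPt, negFrob_iterate hq,
    hm.neg_one_pow]
  simp [neg_eq_iff_add_eq_zero]

lemma sum_ncard_setOf_minimalPeriod_negFrob [IsAlgClosed L] (hq : q = p ^ a)
    (hq0 : (q : L) = 0) {m : ℕ} (hm : Odd m) :
    ∑ d ∈ m.divisors, {x : L | minimalPeriod (negFrob q) x = d}.ncard = q ^ m := by
  have hfix := setOf_isPeriodicPt_negFrob (L := L) hq hq0 hm
  rw [← ncard_setOf_isPeriodicPt hm.pos (hfix ▸ rootSet_finite _ _), hfix,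
    ncard_rootSet_X_pow_add_X (by simp [hq0, hm.pos.ne'])
      ((two_le_of_natCast_eq_zero hq hq0).trans (Nat.le_self_pow hm.pos.ne' q))]

lemma ncard_setOf_minimalPeriod_negFrob [IsAlgClosed L] (hq : q = p ^ a) (hq0 : (q : L) = 0)
    {n : ℕ} (hn : Odd n) :
    ({x : L | minimalPeriod (negFrob q) x = n}.ncard : ℤ) =
      ∑ m ∈ n.divisors, ArithmeticFunction.moebius (n / m) * (q : ℤ) ^ m := by
  rw [← Nat.sum_divisorsAntidiagonal' fun i j => ArithmeticFunction.moebius i * (q : ℤ) ^ j]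
  have hinv := (ArithmeticFunction.sum_eq_iff_sum_mul_moebius_eq_on {m | Odd m}
    (fun _ _ h hm => hm.of_dvd_nat h)
    (f := fun d => ({x : L | minimalPeriod (negFrob q) x = d}.ncard : ℤ))
    (g := fun m => (q : ℤ) ^ m)).1
    (fun m _ hm => by exact_mod_cast sum_ncard_setOf_minimalPeriod_negFrob hq hq0 hm)
    n hn.pos hn
  simpa only [Int.cast_id] using hinv.symm

lemma ncard_setOf_minpoly_mem {K : Type*} [Field K] [PerfectField K] [Algebra K L]
    [IsAlgClosed L]
    {S : Set K[X]} {n : ℕ} (hS : ∀ f ∈ S, f.Monic ∧ Irreducible f ∧ f.natDegree = n)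
    (hfin : {x : L | minpoly K x ∈ S}.Finite) :
    {x : L | minpoly K x ∈ S}.ncard = n * S.ncard := by
  classical
  have hfiber : ∀ f ∈ S, {x : L | minpoly K x = f} = f.rootSet L := fun f hf => by
    obtain ⟨hmon, hirr, -⟩ := hS f hf
    ext x
    rw [Set.mem_ofPred_eq, mem_rootSet_of_ne hirr.ne_zero]
    exact ⟨fun h => h ▸ minpoly.aeval K x,
      fun h => (minpoly.eq_of_irreducible_of_monic hirr h hmon).symm⟩
  have hSfin : S.Finite := (hfin.image (minpoly K)).subset fun f hf => by
    obtain ⟨hmon, hirr, -⟩ := hS f hf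
    obtain ⟨x, hx⟩ := IsAlgClosed.exists_aeval_eq_zero L f (degree_pos_of_irreducible hirr).ne'
    have hxf : minpoly K x = f := (minpoly.eq_of_irreducible_of_monic hirr hx hmon).symm
    exact ⟨x, by simpa [hxf] using hf, hxf⟩
  rw [Set.ncard_eq_toFinset_card _ hfin, Set.ncard_eq_toFinset_card _ hSfin,
    Finset.card_eq_sum_card_fiberwise (f := minpoly K) (t := hSfin.toFinset)
      fun x hx => by simpa using hx, Finset.sum_const_nat fun f hf => ?_, mul_comm]
  have hf : f ∈ S := hSfin.mem_toFinset.1 hf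
  obtain ⟨-, hirr, hdeg⟩ := hS f hf
  rw [← Set.ncard_coe_finset, ← hdeg, ← ncard_rootSet_eq_natDegree (K := L)
    (PerfectField.separable_of_irreducible hirr) (IsAlgClosed.splits _), ← hfiber f hf]
  congr 1
  ext x
  simp only [Finset.coe_filter, Set.Finite.mem_toFinset, Set.mem_ofPred_eq, and_iff_right_iff_imp]
  rintro rfl
  exact hf

end Counting

theorem stmt4_general (q : ℕ) (p : ℕ) [Fact p.Prime] (a : ℕ) (hqp : q = p ^ a)
    (k₂ : Type*) [Field k₂] [Fintype k₂] (hcard : Fintype.card k₂ = q ^ 2)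
    (n : ℕ) (hn : Odd n) :
    (n : ℤ) * ({f : k₂[X] | f.Monic ∧ Irreducible f ∧ f.natDegree = n ∧
        tildePoly q f = f}.ncard : ℤ) =
      ∑ m ∈ n.divisors, (ArithmeticFunction.moebius (n / m)) * (q : ℤ) ^ m := by
  have : CharP k₂ p := charP_of_card_eq_prime_pow (f := a * 2) (by rw [hcard, hqp, ← pow_mul])
  let Ω := AlgebraicClosure k₂
  have : ExpChar Ω p := expChar_of_injective_algebraMap (algebraMap k₂ Ω).injective p
  have hq0 : (q : Ω) = 0 := by
    have hsq : (q : k₂) ^ 2 = 0 := by exact_mod_cast hcard ▸ FiniteField.cast_card_eq_zero k₂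
    rw [← map_natCast (algebraMap k₂ Ω), pow_eq_zero_iff two_ne_zero |>.1 hsq, map_zero]
  set S := {f : k₂[X] | f.Monic ∧ Irreducible f ∧ f.natDegree = n ∧ tildePoly q f = f}
  have hB : {x : Ω | minimalPeriod (negFrob q) x = n} = {x | minpoly k₂ x ∈ S} := by
    ext x
    have hx := Algebra.IsIntegral.isIntegral (R := k₂) x
    simp only [Set.mem_ofPred_eq, S, minimalPeriod_negFrob_eq_iff hqp hcard hx hn,
      minpoly.monic hx, minpoly.irreducible hx, true_and]
  have hfin : {x : Ω | minpoly k₂ x ∈ S}.Finite :=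
    hB ▸ (setOf_isPeriodicPt_negFrob hqp hq0 hn ▸ rootSet_finite _ _).subset
      fun x hx => hx ▸ isPeriodicPt_minimalPeriod _ x
  rw [← ncard_setOf_minimalPeriod_negFrob hqp hq0 hn, hB,
    ncard_setOf_minpoly_mem (fun f hf => ⟨hf.1, hf.2.1, hf.2.2.1⟩) hfin, Nat.cast_mul]

/-- `k₂ = 𝔽_{q²}`. For `n` odd, the number of monic irreducible
polynomials `f ∈ k₂[t]` of degree `n` with `f̃ = f` equals
`w_n(q) = (1/n) ∑_{m ∣ n} μ(n/m) q^m`. -/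
theorem stmt4 (q : ℕ) (p : ℕ) [Fact p.Prime] (a : ℕ) (hqp : q = p ^ a) (ha : 1 ≤ a)
    (k₂ : Type*) [Field k₂] [Fintype k₂] (hcard : Fintype.card k₂ = q ^ 2)
    (n : ℕ) (hn : Odd n) (hn1 : 1 ≤ n) :
    (n : ℤ) * ({f : k₂[X] | f.Monic ∧ Irreducible f ∧ f.natDegree = n ∧
        tildePoly q f = f}.ncard : ℤ) =
      ∑ m ∈ n.divisors, (ArithmeticFunction.moebius (n / m)) * (q : ℤ) ^ m :=
  stmt4_general q p a hqp k₂ hcard n hn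
end

section
/- Let x ∈ M_n(𝔬_ℓ) where 𝔬_ℓ = 𝔬/𝔭^ℓ is a finite quotient of a complete discrete valuation ring, and suppose the reduction of x modulo 𝔭 is a regular (cyclic) matrix over the residue field k. Then x is regular over 𝔬_ℓ and the centralizer of x in M_n(𝔬_ℓ) equals 𝔬_ℓ[x], the subalgebra generated by x, which is a free 𝔬_ℓ-module of rank n. -/
/-!
Over the residue field `k`, the `k[X]`-module `kⁿ` defined by `x₁` has a vector `v` whose
annihilator is that of the whole module, `(minpoly x₁)` (structure theory over the PID `k[X]`).
As `deg (minpoly x₁) = deg (charpoly x₁) = n`, the vectors `x₁ⁱ v`, `i < n`, form a basis. The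
kernel of `𝔬_ℓ → k` is nilpotent, so by Nakayama any lift of `v` is a cyclic vector of `x`.
Over any commutative ring, a matrix commuting with `x` is determined by its value at a cyclic
vector; hence the centralizer of `x` is `𝔬_ℓ[x]`, and evaluation at the cyclic vector is an
isomorphism `𝔬_ℓ[x] ≅ 𝔬_ℓⁿ`.
-/

open Polynomial

namespace Matrix

variable {R : Type*} [CommRing R] {n : ℕ}

def IsCyclicVector (x : Matrix (Fin n) (Fin n) R) (v : Fin n → R) : Prop :=
  Submodule.span R (Set.range fun i : Fin n => (x ^ (i : ℕ)) *ᵥ v) = ⊤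

namespace IsCyclicVector

variable {x : Matrix (Fin n) (Fin n) R} {v : Fin n → R}

theorem eq_zero_of_commute_of_mulVec_eq_zero (hv : x.IsCyclicVector v)
    {c : Matrix (Fin n) (Fin n) R} (hc : Commute x c) (hcv : c *ᵥ v = 0) : c = 0 := by
  have hker : ⊤ ≤ LinearMap.ker c.mulVecLin := by
    rw [← hv, Submodule.span_le]
    rintro _ ⟨i, rfl⟩
    rw [SetLike.mem_coe, LinearMap.mem_ker, mulVecLin_apply, mulVec_mulVec,
      ← (hc.pow_left i).eq, ← mulVec_mulVec, hcv, mulVec_zero]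
  exact ext_of_mulVec_single fun j => by rw [zero_mulVec]; exact hker Submodule.mem_top

theorem commute_iff_mem_adjoin (hv : x.IsCyclicVector v) (b : Matrix (Fin n) (Fin n) R) :
    Commute x b ↔ b ∈ Algebra.adjoin R {x} := by
  refine ⟨fun hb => ?_, Algebra.commute_of_mem_adjoin_self⟩
  obtain ⟨c, hc⟩ := (Submodule.mem_span_range_iff_exists_fun R).mp
    (hv ▸ Submodule.mem_top : b *ᵥ v ∈ Submodule.span R _)
  have hp : ∑ i, c i • x ^ (i : ℕ) ∈ Algebra.adjoin R {x} :=
    Subalgebra.sum_mem _ fun i _ => Subalgebra.smul_mem _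
      (Subalgebra.pow_mem _ (Algebra.self_mem_adjoin_singleton R x) _) _
  have hbp : b - ∑ i, c i • x ^ (i : ℕ) = 0 := by
    refine hv.eq_zero_of_commute_of_mulVec_eq_zero
      (hb.sub_right (Algebra.commute_of_mem_adjoin_self hp)) ?_
    simp only [sub_mulVec, sum_mulVec, smul_mulVec, hc, sub_self]
  rwa [sub_eq_zero.mp hbp]

noncomputable def adjoinEquiv (hv : x.IsCyclicVector v) :
    Algebra.adjoin R {x} ≃ₗ[R] (Fin n → R) :=
  LinearEquiv.ofBijective
    (LinearMap.applyₗ v ∘ₗ toLin'.toLinearMap ∘ₗ (Algebra.adjoin R {x}).val.toLinearMap) <| by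
    refine ⟨(injective_iff_map_eq_zero _).mpr fun a ha => Subtype.ext <|
      hv.eq_zero_of_commute_of_mulVec_eq_zero (Algebra.commute_of_mem_adjoin_self a.2) ha, ?_⟩
    rw [← LinearMap.range_eq_top, eq_top_iff, ← hv, Submodule.span_le]
    rintro _ ⟨i, rfl⟩
    exact ⟨⟨x ^ (i : ℕ), Subalgebra.pow_mem _ (Algebra.self_mem_adjoin_singleton R x) _⟩, rfl⟩

noncomputable def basisAdjoin (hv : x.IsCyclicVector v) :
    Module.Basis (Fin n) R (Algebra.adjoin R {x}) :=
  (Pi.basisFun R (Fin n)).map hv.adjoinEquiv.symm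

end IsCyclicVector

section Field

variable {K : Type*} [Field K] {m : Type*} [Fintype m] [DecidableEq m]

theorem exists_aeval_mulVec_eq_zero_iff_minpoly_dvd (x : Matrix m m K) :
    ∃ v : m → K, ∀ q : K[X], aeval x q *ᵥ v = 0 ↔ minpoly K x ∣ q := by
  obtain ⟨a, ha⟩ :=
    Module.exists_ker_toSpanSingleton_eq_annihilator K[X] (Module.AEval' (toLin' x))
  obtain ⟨v, rfl⟩ := (Module.AEval'.of _).surjective a
  refine ⟨v, fun q => ?_⟩
  rw [← minpoly_toLin', ← Ideal.mem_span_singleton, span_minpoly_eq_annihilator, ← ha,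
    LinearMap.mem_ker, LinearMap.toSpanSingleton_apply, ← Module.AEval.of_aeval_smul,
    LinearEquiv.map_eq_zero_iff, ← toLinAlgEquiv'_apply, ← aeval_algHom_apply]
  rfl

theorem linearIndependent_pow_mulVec {x : Matrix m m K} {v : m → K}
    (hv : ∀ q : K[X], aeval x q *ᵥ v = 0 → minpoly K x ∣ q) {d : ℕ}
    (hd : d ≤ (minpoly K x).natDegree) :
    LinearIndependent K (fun i : Fin d => (x ^ (i : ℕ)) *ᵥ v) := by
  let φ : K[X] →ₗ[K] (m → K) :=
    LinearMap.applyₗ v ∘ₗ toLin'.toLinearMap ∘ₗ (aeval x).toLinearMap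
  have hX : LinearIndependent K (fun i : Fin d => (X ^ (i : ℕ) : K[X])) := by
    simpa [Function.comp_def, monomial_one_right_eq_X_pow] using
      (basisMonomials K).linearIndependent.comp _ Fin.val_injective
  have hdisj : Disjoint (Submodule.span K (Set.range fun i : Fin d => (X ^ (i : ℕ) : K[X])))
      (LinearMap.ker φ) := by
    refine Submodule.disjoint_def.mpr fun q hq hφq => ?_
    have hdeg : q.degree < d := by
      refine mem_degreeLT.mp (Submodule.span_le.mpr ?_ hq)
      rintro _ ⟨i, rfl⟩
      exact mem_degreeLT.mpr ((degree_X_pow_le _).trans_lt (by exact_mod_cast i.2))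
    by_contra hq0
    have := natDegree_le_of_dvd (hv q hφq) hq0
    have := (natDegree_lt_iff_degree_lt hq0).mpr hdeg
    omega
  simpa [φ, Function.comp_def] using hX.map hdisj

theorem exists_isCyclicVector_of_charpoly_eq_minpoly {n : ℕ} {x : Matrix (Fin n) (Fin n) K}
    (h : x.charpoly = minpoly K x) : ∃ v, x.IsCyclicVector v := by
  obtain ⟨v, hv⟩ := exists_aeval_mulVec_eq_zero_iff_minpoly_dvd x
  have hdeg : (minpoly K x).natDegree = n := by
    rw [← h, charpoly_natDegree_eq_dim, Fintype.card_fin]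
  exact ⟨v, (linearIndependent_pow_mulVec (fun q => (hv q).1) hdeg.ge)
    |>.span_eq_top_of_card_eq_finrank' (by simp)⟩

end Field

section Lift

variable {R S : Type*} [CommRing R] [CommRing S] {π : R →+* S}

theorem span_eq_top_of_span_map_eq_top (hπ : Function.Surjective π)
    (hker : RingHom.ker π ≤ Ideal.jacobson ⊥) {ι m : Type*} [Fintype ι] [Fintype m]
    {w : ι → m → R} (h : Submodule.span S (Set.range fun i => π ∘ w i) = ⊤) :
    Submodule.span R (Set.range w) = ⊤ := by
  classical
  refine top_le_iff.mp <| Submodule.le_of_le_smul_of_le_jacobson_bot Module.Finite.fg_top hker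
    fun u _ => ?_
  obtain ⟨c, hc⟩ := (Submodule.mem_span_range_iff_exists_fun S).mp
    (h ▸ Submodule.mem_top : π ∘ u ∈ Submodule.span S _)
  choose c' hc' using fun i => hπ (c i)
  have hu : u - ∑ i, c' i • w i ∈ RingHom.ker π • (⊤ : Submodule R (m → R)) := by
    rw [pi_eq_sum_univ (u - _)]
    refine Submodule.sum_mem _ fun j _ => Submodule.smul_mem_smul ?_ Submodule.mem_top
    have := congrFun hc j
    simp only [Finset.sum_apply, Pi.smul_apply, smul_eq_mul, Function.comp_apply] at this
    simp [RingHom.mem_ker, map_sum, hc', this]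
  rw [← add_sub_cancel (∑ i, c' i • w i) u]
  exact Submodule.add_mem _ (Submodule.mem_sup_left <| Submodule.sum_mem _ fun i _ =>
    Submodule.smul_mem _ _ (Submodule.subset_span ⟨i, rfl⟩)) (Submodule.mem_sup_right hu)

theorem exists_isCyclicVector_of_map (hπ : Function.Surjective π)
    (hker : RingHom.ker π ≤ Ideal.jacobson ⊥) {n : ℕ} {x : Matrix (Fin n) (Fin n) R}
    (h : ∃ v, (x.map π).IsCyclicVector v) : ∃ v, x.IsCyclicVector v := by
  obtain ⟨v₁, hv₁⟩ := h
  obtain ⟨v, rfl⟩ := hπ.comp_left v₁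
  refine ⟨v, span_eq_top_of_span_map_eq_top hπ hker ?_⟩
  have hmap : (fun i : Fin n => π ∘ (x ^ (i : ℕ) *ᵥ v)) =
      fun i : Fin n => x.map π ^ (i : ℕ) *ᵥ (π ∘ v) := by
    ext i j
    rw [Function.comp_apply, RingHom.map_mulVec, Matrix.map_pow]
  rwa [hmap]

end Lift

end Matrix

theorem Ideal.ker_factor_pow_le_jacobson {A : Type*} [CommRing A] (I : Ideal A) {ℓ : ℕ}
    (hℓ : ℓ ≠ 0) :
    RingHom.ker (Ideal.Quotient.factor (Ideal.pow_le_self (I := I) hℓ)) ≤ jacobson ⊥ := by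
  refine le_trans (fun a ha => ?_) radical_le_jacobson
  obtain ⟨a, rfl⟩ := Quotient.mk_surjective a
  rw [RingHom.mem_ker, Quotient.factor_mk, Quotient.eq_zero_iff_mem] at ha
  exact ⟨ℓ, by rw [mem_bot, ← map_pow, Quotient.eq_zero_iff_mem]; exact pow_mem_pow ha ℓ⟩

theorem stmt13_general (O : Type*) [CommRing O] [IsDomain O] [IsDiscreteValuationRing O]
    (ℓ : ℕ) (hℓ : 0 < ℓ) (n : ℕ)
    (x : Matrix (Fin n) (Fin n) (O ⧸ (IsLocalRing.maximalIdeal O ^ ℓ)))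
    (x₁ : Matrix (Fin n) (Fin n) (O ⧸ (IsLocalRing.maximalIdeal O)))
    (hx₁ : x₁ = x.map
      (Ideal.Quotient.factor (Ideal.pow_le_self hℓ.ne')))
    (hreg : x₁.charpoly = minpoly (O ⧸ (IsLocalRing.maximalIdeal O)) x₁) :
    (∃ v : Fin n → (O ⧸ (IsLocalRing.maximalIdeal O ^ ℓ)),
        Submodule.span (O ⧸ (IsLocalRing.maximalIdeal O ^ ℓ))
          (Set.range fun i : Fin n => (x ^ (i : ℕ)).mulVec v) = ⊤) ∧
      (∀ b : Matrix (Fin n) (Fin n) (O ⧸ (IsLocalRing.maximalIdeal O ^ ℓ)),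
        x * b = b * x ↔
          b ∈ Algebra.adjoin (O ⧸ (IsLocalRing.maximalIdeal O ^ ℓ)) ({x} : Set _)) ∧
      Nonempty (Module.Basis (Fin n) (O ⧸ (IsLocalRing.maximalIdeal O ^ ℓ))
        (Algebra.adjoin (O ⧸ (IsLocalRing.maximalIdeal O ^ ℓ)) ({x} : Set _))) := by
  let := Ideal.Quotient.field (IsLocalRing.maximalIdeal O)
  obtain ⟨v, hv⟩ := Matrix.exists_isCyclicVector_of_map (Ideal.Quotient.factor_surjective _)
    (Ideal.ker_factor_pow_le_jacobson _ hℓ.ne')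
    (hx₁ ▸ Matrix.exists_isCyclicVector_of_charpoly_eq_minpoly hreg)
  exact ⟨⟨v, hv⟩, hv.commute_iff_mem_adjoin, ⟨hv.basisAdjoin⟩⟩

/-- Let `𝔬` be a complete discrete valuation ring with maximal ideal
`𝔭` and finite residue field, let `𝔬_ℓ = 𝔬/𝔭^ℓ` and `x ∈ M_n(𝔬_ℓ)`. If the reduction
of `x` modulo `𝔭` is regular (characteristic polynomial = minimal polynomial), then
`x` is regular over `𝔬_ℓ` (has a cyclic vector) and the centralizer of `x` in
`M_n(𝔬_ℓ)` is `𝔬_ℓ[x]`, a free `𝔬_ℓ`-module of rank `n`. -/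
theorem stmt13 (O : Type*) [CommRing O] [IsDomain O] [IsDiscreteValuationRing O]
    [IsAdicComplete (IsLocalRing.maximalIdeal O) O]
    [Finite (IsLocalRing.ResidueField O)]
    (ℓ : ℕ) (hℓ : 0 < ℓ) (n : ℕ)
    (x : Matrix (Fin n) (Fin n) (O ⧸ (IsLocalRing.maximalIdeal O ^ ℓ)))
    (x₁ : Matrix (Fin n) (Fin n) (O ⧸ (IsLocalRing.maximalIdeal O)))
    (hx₁ : x₁ = x.map
      (Ideal.Quotient.factor (Ideal.pow_le_self hℓ.ne')))
    (hreg : x₁.charpoly = minpoly (O ⧸ (IsLocalRing.maximalIdeal O)) x₁) :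
    (∃ v : Fin n → (O ⧸ (IsLocalRing.maximalIdeal O ^ ℓ)),
        Submodule.span (O ⧸ (IsLocalRing.maximalIdeal O ^ ℓ))
          (Set.range fun i : Fin n => (x ^ (i : ℕ)).mulVec v) = ⊤) ∧
      (∀ b : Matrix (Fin n) (Fin n) (O ⧸ (IsLocalRing.maximalIdeal O ^ ℓ)),
        x * b = b * x ↔
          b ∈ Algebra.adjoin (O ⧸ (IsLocalRing.maximalIdeal O ^ ℓ)) ({x} : Set _)) ∧
      Nonempty (Module.Basis (Fin n) (O ⧸ (IsLocalRing.maximalIdeal O ^ ℓ))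
        (Algebra.adjoin (O ⧸ (IsLocalRing.maximalIdeal O ^ ℓ)) ({x} : Set _))) :=
  stmt13_general O ℓ hℓ n x x₁ hx₁ hreg
end
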